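/- arXiv:math/0604492 — 4 statements merged into one kernel-verified Lean document; each statement's English description precedes it below -/
import Mathlib

section
/- Let G be a discrete finitely generated group and let (Γ_i)_{i≥0} be a decreasing sequence of finite-index subgroups of G with associated subodometer lim_{←i}(G/Γ_i, π_i). Then there exists a decreasing sequence (K_i)_{i≥0} of finite-index normal subgroups of G with K_i ⊆ Γ_i for every i, and a factor map from the odometer lim_{←i}(G/K_i, π_i) onto the subodometer lim_{←i}(G/Γ_i, π_i); that is, every subodometer admits a G-odometer as an extension. -/
/-!
Take `Kᵢ` to be the normal core of `Γᵢ`: it is normal, of finite index, contained in `Γᵢ`, and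
decreasing in `i`, so the coset maps `G/Kᵢ → G/Γᵢ` assemble into a continuous equivariant map
of inverse limits. Surjectivity is the compactness step: the fibres over a point of the
subodometer form an inverse sequence of nonempty finite sets, which has a thread by König's lemma.
-/

open Pointwise MeasureTheory

/-- Compatibility condition defining the inverse limit `lim_{←i} (G/Γᵢ, πᵢ)`:
a sequence of cosets is compatible if any representative of the `(i+1)`-th coordinate
also represents the `i`-th coordinate. -/
def Compat {G : Type*} [Group G] (Γ : ℕ → Subgroup G) (x : ∀ i, G ⧸ Γ i) : Prop :=
  ∀ (i : ℕ) (g : G),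
    (QuotientGroup.mk g : G ⧸ Γ (i + 1)) = x (i + 1) →
    (QuotientGroup.mk g : G ⧸ Γ i) = x i

/-- The subodometer `←G = lim_{←i} (G/Γᵢ, πᵢ)` associated to a sequence of subgroups. -/
def Subodometer {G : Type*} [Group G] (Γ : ℕ → Subgroup G) : Type _ :=
  { x : ∀ i, G ⧸ Γ i // Compat Γ x }

/-- Topology of the subodometer: subspace topology of the product of the (discrete)
coset spaces. -/
instance {G : Type*} [Group G] (Γ : ℕ → Subgroup G) [TopologicalSpace G] :
    TopologicalSpace (Subodometer Γ) :=
  instTopologicalSpaceSubtype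

lemma compat_smul {G : Type*} [Group G] (Γ : ℕ → Subgroup G) (g : G) (x : ∀ i, G ⧸ Γ i)
    (hx : Compat Γ x) : Compat Γ (fun i => g • x i) := by
  intro i h hh
  change (QuotientGroup.mk h : G ⧸ Γ (i + 1)) = g • x (i + 1) at hh
  show (QuotientGroup.mk h : G ⧸ Γ i) = g • x i
  obtain ⟨a, ha⟩ := QuotientGroup.mk_surjective (x (i + 1))
  have h1 : (QuotientGroup.mk (g * a) : G ⧸ Γ (i + 1)) = g • x (i + 1) := by
    rw [← ha]; rfl
  rw [← h1] at hh
  have h2 : (QuotientGroup.mk (g⁻¹ * h) : G ⧸ Γ (i + 1)) = QuotientGroup.mk a := by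
    rw [QuotientGroup.eq] at hh ⊢
    simpa [mul_assoc] using hh
  have h3 := hx i _ (h2.trans ha)
  have h4 : (QuotientGroup.mk (g * (g⁻¹ * h)) : G ⧸ Γ i) = g • x i := by
    rw [show (QuotientGroup.mk (g * (g⁻¹ * h)) : G ⧸ Γ i)
        = g • (QuotientGroup.mk (g⁻¹ * h) : G ⧸ Γ i) from rfl, h3]
  simpa [mul_assoc] using h4

/-- The action of `G` on the subodometer by coordinatewise left multiplication. -/
instance {G : Type*} [Group G] (Γ : ℕ → Subgroup G) : MulAction G (Subodometer Γ) where
  smul g x := ⟨fun i => g • x.1 i, compat_smul Γ g x.1 x.2⟩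
  one_smul x := Subtype.ext (funext fun i => one_smul G (x.1 i))
  mul_smul g h x := Subtype.ext (funext fun i => mul_smul g h (x.1 i))

/-- The distinguished point `e` of the subodometer: the sequence of cosets of the
neutral element. -/
def odoE {G : Type*} [Group G] (Γ : ℕ → Subgroup G) (hΓ : ∀ i, Γ (i + 1) ≤ Γ i) :
    Subodometer Γ :=
  ⟨fun i => QuotientGroup.mk 1, by
    intro i g hg
    rw [QuotientGroup.eq] at hg ⊢
    exact hΓ i hg⟩

/-- The canonical map `τ : G → ←G`, `τ(g) = (gΓᵢ)ᵢ`. -/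
def odoTau {G : Type*} [Group G] (Γ : ℕ → Subgroup G) (hΓ : ∀ i, Γ (i + 1) ≤ Γ i) (g : G) :
    Subodometer Γ :=
  ⟨fun i => QuotientGroup.mk g, by
    intro i h hh
    rw [QuotientGroup.eq] at hh ⊢
    exact hΓ i hh⟩

/-- A factor map between two `G`-systems: a continuous surjection commuting with the
`G`-actions. -/
def IsFactorMap (G : Type*) {X Y : Type*} [Group G] [TopologicalSpace X] [TopologicalSpace Y]
    [MulAction G X] [MulAction G Y] (π : X → Y) : Prop :=
  Continuous π ∧ Function.Surjective π ∧ ∀ (g : G) (x : X), π (g • x) = g • π x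

section QuotientMapOfLE

variable {G : Type*} [Group G] {H K L : Subgroup G}

theorem quotientMapOfLE_quotientMapOfLE (hHK : H ≤ K) (hKL : K ≤ L) (c : G ⧸ H) :
    Subgroup.quotientMapOfLE hKL (Subgroup.quotientMapOfLE hHK c) =
      Subgroup.quotientMapOfLE (hHK.trans hKL) c := by
  induction c using QuotientGroup.induction_on
  rfl

theorem quotientMapOfLE_smul (hHK : H ≤ K) (g : G) (c : G ⧸ H) :
    Subgroup.quotientMapOfLE hHK (g • c) = g • Subgroup.quotientMapOfLE hHK c := by
  induction c using QuotientGroup.induction_on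
  rfl

theorem continuous_quotientMapOfLE [TopologicalSpace G] (hHK : H ≤ K) :
    Continuous (Subgroup.quotientMapOfLE hHK) :=
  continuous_id.quotient_map' _

end QuotientMapOfLE

open CategoryTheory in
theorem exists_seq_map_succ_eq_of_finite {X : ℕ → Type*} [∀ n, Finite (X n)]
    [∀ n, Nonempty (X n)] (f : ∀ n, X (n + 1) → X n) :
    ∃ s : ∀ n, X n, ∀ n, f n (s (n + 1)) = s n := by
  let F := Functor.ofOpSequence (fun n => TypeCat.ofHom (f n))
  have : ∀ j, Finite (F.obj j) := fun j => inferInstanceAs (Finite (X j.unop))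
  have : ∀ j, Nonempty (F.obj j) := fun j => inferInstanceAs (Nonempty (X j.unop))
  obtain ⟨s, hs⟩ := nonempty_sections_of_finite_inverse_system F
  refine ⟨fun n => s (Opposite.op n), fun n => ?_⟩
  have := hs (homOfLE (Nat.le_succ n)).op
  rwa [Functor.ofOpSequence_map_homOfLE_succ] at this

namespace Subodometer

variable {G : Type*} [Group G] {K Γ : ℕ → Subgroup G}

theorem compat_iff (hΓ : ∀ i, Γ (i + 1) ≤ Γ i) (x : ∀ i, G ⧸ Γ i) :
    Compat Γ x ↔ ∀ i, Subgroup.quotientMapOfLE (hΓ i) (x (i + 1)) = x i := by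
  constructor
  · intro hx i
    obtain ⟨a, ha⟩ := QuotientGroup.mk_surjective (x (i + 1))
    rw [← ha, ← hx i a ha]
    rfl
  · intro hx i g hg
    rw [← hx i, ← hg]
    rfl

def map (hKΓ : ∀ i, K i ≤ Γ i) (hΓ : ∀ i, Γ (i + 1) ≤ Γ i) (x : Subodometer K) :
    Subodometer Γ :=
  ⟨fun i => Subgroup.quotientMapOfLE (hKΓ i) (x.1 i), by
    refine (compat_iff hΓ _).2 fun i => ?_
    obtain ⟨a, ha⟩ := QuotientGroup.mk_surjective (x.1 (i + 1))
    rw [← ha, ← x.2 i a ha]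
    rfl⟩

variable (hKΓ : ∀ i, K i ≤ Γ i) (hΓ : ∀ i, Γ (i + 1) ≤ Γ i)

theorem continuous_map [TopologicalSpace G] : Continuous (map hKΓ hΓ) :=
  Continuous.subtype_mk (continuous_pi fun i =>
    (continuous_quotientMapOfLE (hKΓ i)).comp ((continuous_apply i).comp continuous_subtype_val)) _

theorem map_smul (g : G) (x : Subodometer K) : map hKΓ hΓ (g • x) = g • map hKΓ hΓ x :=
  Subtype.ext <| funext fun i => quotientMapOfLE_smul (hKΓ i) g (x.1 i)

theorem map_surjective [∀ i, (K i).FiniteIndex] (hK : ∀ i, K (i + 1) ≤ K i) :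
    Function.Surjective (map hKΓ hΓ) := by
  rintro ⟨y, hy⟩
  let fiber n := {c : G ⧸ K n // Subgroup.quotientMapOfLE (hKΓ n) c = y n}
  have fiber_nonempty n : Nonempty (fiber n) := by
    obtain ⟨a, ha⟩ := QuotientGroup.mk_surjective (y n)
    exact ⟨⟨a, ha⟩⟩
  let proj n : fiber (n + 1) → fiber n := fun ⟨c, hc⟩ =>
    ⟨Subgroup.quotientMapOfLE (hK n) c, by
      rw [quotientMapOfLE_quotientMapOfLE, ← (compat_iff hΓ y).1 hy n, ← hc,
        quotientMapOfLE_quotientMapOfLE]⟩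
  obtain ⟨s, hs⟩ := exists_seq_map_succ_eq_of_finite proj
  refine ⟨⟨fun n => (s n).1, (compat_iff hK _).2 fun n => congrArg Subtype.val (hs n)⟩, ?_⟩
  exact Subtype.ext <| funext fun n => (s n).2

theorem isFactorMap_map [TopologicalSpace G] [∀ i, (K i).FiniteIndex]
    (hK : ∀ i, K (i + 1) ≤ K i) : IsFactorMap G (map hKΓ hΓ) :=
  ⟨continuous_map hKΓ hΓ, map_surjective hKΓ hΓ hK, map_smul hKΓ hΓ⟩

end Subodometer

theorem statement1_general {G : Type*} [Group G] [TopologicalSpace G]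
    (Γ : ℕ → Subgroup G) (hdec : ∀ i, Γ (i + 1) ≤ Γ i) (hfin : ∀ i, (Γ i).FiniteIndex) :
    ∃ K : ℕ → Subgroup G,
      (∀ i, K (i + 1) ≤ K i) ∧ (∀ i, (K i).Normal) ∧ (∀ i, (K i).FiniteIndex) ∧
      (∀ i, K i ≤ Γ i) ∧
      ∃ π : Subodometer K → Subodometer Γ, IsFactorMap G π := by
  let K i := (Γ i).normalCore
  have hKΓ i : K i ≤ Γ i := Subgroup.normalCore_le _
  have hK i : K (i + 1) ≤ K i := Subgroup.normalCore_mono (hdec i)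
  have hKfin i : (K i).FiniteIndex := @Subgroup.finiteIndex_normalCore _ _ _ (hfin i)
  exact ⟨K, hK, fun i => Subgroup.normalCore_normal _, hKfin, hKΓ,
    Subodometer.map hKΓ hdec, Subodometer.isFactorMap_map hKΓ hdec hK⟩

/-- Proposition `propodo`: every subodometer admits a `G`-odometer as
an extension. -/
theorem statement1 {G : Type*} [Group G] [Group.FG G] [TopologicalSpace G] [DiscreteTopology G]
    (Γ : ℕ → Subgroup G) (hdec : ∀ i, Γ (i + 1) ≤ Γ i) (hfin : ∀ i, (Γ i).FiniteIndex) :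
    ∃ K : ℕ → Subgroup G,
      (∀ i, K (i + 1) ≤ K i) ∧ (∀ i, (K i).Normal) ∧ (∀ i, (K i).FiniteIndex) ∧
      (∀ i, K i ≤ Γ i) ∧
      ∃ π : Subodometer K → Subodometer Γ, IsFactorMap G π :=
  statement1_general Γ hdec hfin
end

section
/- Let G be a discrete finitely generated group, let ←G = lim_{←i}(G/Γ_i, π_i) be a G-odometer (so each Γ_i is normal and ←G is a compact topological group under coordinatewise multiplication, containing the image of G as a dense subgroup), and let (X, G) be a topological dynamical system. If p : ←G → X is a factor map and e denotes the identity element of ←G, then H := p^{-1}({p(e)}) is a closed subgroup of ←G, for every g ∈ ←G one has p^{-1}({p(g)}) = gH, and p induces a G-equivariant homeomorphism from the quotient space ←G/H onto X. -/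
/-!
In an odometer, left multiplication by any `z` is a pointwise limit of translations by elements
of `G`, so an equivariant continuous `p` into a Hausdorff space identifies `z * x` and `z * y`
whenever it identifies `x` and `y`. Hence the fibres of `p` are the left cosets of the fibre `H`
over the identity, and `p` descends to a continuous bijection `←G ⧸ H → X`, which is a
homeomorphism because `←G` is compact.
-/

open Pointwise MeasureTheory

lemma compat_mul {G : Type*} [Group G] (Γ : ℕ → Subgroup G) [∀ i, (Γ i).Normal]
    (hΓ : ∀ i, Γ (i + 1) ≤ Γ i)
    {x y : ∀ i, G ⧸ Γ i} (hx : Compat Γ x) (hy : Compat Γ y) :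
    Compat Γ (fun i => x i * y i) := by
  intro i g hg
  change (QuotientGroup.mk g : G ⧸ Γ (i + 1)) = x (i + 1) * y (i + 1) at hg
  show (QuotientGroup.mk g : G ⧸ Γ i) = x i * y i
  obtain ⟨a, ha⟩ := QuotientGroup.mk_surjective (x (i + 1))
  obtain ⟨b, hb⟩ := QuotientGroup.mk_surjective (y (i + 1))
  have hg' : (QuotientGroup.mk g : G ⧸ Γ (i + 1)) = QuotientGroup.mk (a * b) := by
    rw [QuotientGroup.mk_mul, ha, hb]
    exact hg
  have h1 : (QuotientGroup.mk g : G ⧸ Γ i) = QuotientGroup.mk (a * b) :=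
    QuotientGroup.eq.mpr (hΓ i (QuotientGroup.eq.mp hg'))
  rw [h1, QuotientGroup.mk_mul, hx i a ha, hy i b hb]

lemma compat_inv {G : Type*} [Group G] (Γ : ℕ → Subgroup G) [∀ i, (Γ i).Normal]
    (hΓ : ∀ i, Γ (i + 1) ≤ Γ i) {x : ∀ i, G ⧸ Γ i} (hx : Compat Γ x) :
    Compat Γ (fun i => (x i)⁻¹) := by
  intro i g hg
  change (QuotientGroup.mk g : G ⧸ Γ (i + 1)) = (x (i + 1))⁻¹ at hg
  show (QuotientGroup.mk g : G ⧸ Γ i) = (x i)⁻¹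
  obtain ⟨a, ha⟩ := QuotientGroup.mk_surjective (x (i + 1))
  have hg' : (QuotientGroup.mk g : G ⧸ Γ (i + 1)) = QuotientGroup.mk a⁻¹ := by
    rw [← ha] at hg
    rw [hg, QuotientGroup.mk_inv]
  have h1 : (QuotientGroup.mk g : G ⧸ Γ i) = QuotientGroup.mk a⁻¹ :=
    QuotientGroup.eq.mpr (hΓ i (QuotientGroup.eq.mp hg'))
  rw [h1, QuotientGroup.mk_inv, hx i a ha]

lemma compat_one {G : Type*} [Group G] (Γ : ℕ → Subgroup G) [∀ i, (Γ i).Normal]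
    (hΓ : ∀ i, Γ (i + 1) ≤ Γ i) :
    Compat Γ (fun i => (1 : G ⧸ Γ i)) := by
  intro i g hg
  change (QuotientGroup.mk g : G ⧸ Γ (i + 1)) = 1 at hg
  show (QuotientGroup.mk g : G ⧸ Γ i) = 1
  rw [QuotientGroup.eq_one_iff] at hg ⊢
  exact hΓ i hg

/-- When every `Γᵢ` is normal, the odometer `←G` is a group under coordinatewise
multiplication. -/
def odoGroup {G : Type*} [Group G] (Γ : ℕ → Subgroup G) [∀ i, (Γ i).Normal]
    (hΓ : ∀ i, Γ (i + 1) ≤ Γ i) : Group (Subodometer Γ) where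
  mul x y := ⟨fun i => x.1 i * y.1 i, compat_mul Γ hΓ x.2 y.2⟩
  one := ⟨fun i => 1, compat_one Γ hΓ⟩
  inv x := ⟨fun i => (x.1 i)⁻¹, compat_inv Γ hΓ x.2⟩
  mul_assoc a b c := Subtype.ext (funext fun i => mul_assoc _ _ _)
  one_mul a := Subtype.ext (funext fun i => one_mul _)
  mul_one a := Subtype.ext (funext fun i => mul_one _)
  inv_mul_cancel a := Subtype.ext (funext fun i => inv_mul_cancel _)

section FiberSubgroup

variable {K X : Type*} [Group K] (p : K → X)
  (hp : ∀ z x y : K, p x = p y → p (z * x) = p (z * y))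

def fiberSubgroup : Subgroup K where
  carrier := p ⁻¹' {p 1}
  one_mem' := rfl
  mul_mem' {a b} ha hb := (hp a b 1 hb).trans ((congrArg p (mul_one a)).trans ha)
  inv_mem' {a} ha := by
    have h : p (a⁻¹ * 1) = p (a⁻¹ * a) := hp a⁻¹ 1 a ha.symm
    rwa [mul_one, inv_mul_cancel] at h

theorem inv_mul_mem_fiberSubgroup_iff {a b : K} : a⁻¹ * b ∈ fiberSubgroup p hp ↔ p a = p b := by
  constructor
  · intro h
    have hab : p (a * (a⁻¹ * b)) = p (a * 1) := hp a _ 1 h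
    rwa [mul_inv_cancel_left, mul_one, eq_comm] at hab
  · intro h
    have hab : p (a⁻¹ * b) = p (a⁻¹ * a) := hp a⁻¹ b a h.symm
    rwa [inv_mul_cancel] at hab

theorem preimage_singleton_eq_image_mul_fiberSubgroup (g : K) :
    p ⁻¹' {p g} = (g * ·) '' (fiberSubgroup p hp : Set K) := by
  ext x
  rw [Set.image_mul_left, Set.mem_preimage, Set.mem_singleton_iff, Set.mem_preimage,
    SetLike.mem_coe, inv_mul_mem_fiberSubgroup_iff, eq_comm]

variable [TopologicalSpace K] [CompactSpace K] [TopologicalSpace X] [T2Space X]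

noncomputable def fiberSubgroup.quotientHomeomorph (hc : Continuous p)
    (hs : Function.Surjective p) : K ⧸ fiberSubgroup p hp ≃ₜ X :=
  have hwd : ∀ a b, QuotientGroup.leftRel (fiberSubgroup p hp) a b → p a = p b :=
    fun _ _ h => (inv_mul_mem_fiberSubgroup_iff p hp).mp (QuotientGroup.leftRel_apply.mp h)
  have hinj : Function.Injective (Quotient.lift p hwd) := by
    rintro ⟨a⟩ ⟨b⟩ hab
    exact Quotient.sound (QuotientGroup.leftRel_apply.mpr
      ((inv_mul_mem_fiberSubgroup_iff p hp).mpr hab))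
  (hc.quotient_lift hwd).homeoOfEquivCompactToT2
    (f := Equiv.ofBijective _ ⟨hinj, hs.of_comp (g := QuotientGroup.mk)⟩)

theorem fiberSubgroup.quotientHomeomorph_mk (hc : Continuous p) (hs : Function.Surjective p)
    (y : K) : fiberSubgroup.quotientHomeomorph p hp hc hs (QuotientGroup.mk y) = p y :=
  rfl

end FiberSubgroup

section Odometer

variable {G : Type*} [Group G] {Γ : ℕ → Subgroup G}

theorem Compat.mk_eq_of_le {x : ∀ i, G ⧸ Γ i} (hx : Compat Γ x) {i n : ℕ} (hin : i ≤ n) {g : G}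
    (hg : (QuotientGroup.mk g : G ⧸ Γ n) = x n) : (QuotientGroup.mk g : G ⧸ Γ i) = x i := by
  induction n, hin using Nat.le_induction generalizing g with
  | base => exact hg
  | succ n _ ih => exact ih (hx n g hg)

instance [TopologicalSpace G] [DiscreteTopology G] (H : Subgroup G) :
    DiscreteTopology (G ⧸ H) :=
  discreteTopology_iff_forall_isOpen.mpr fun _ => isOpen_coinduced.mpr (isOpen_discrete _)

theorem Subodometer.compactSpace [TopologicalSpace G] [DiscreteTopology G]
    (hfin : ∀ i, (Γ i).FiniteIndex) : CompactSpace (Subodometer Γ) := by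
  have : ∀ i, (Γ i).FiniteIndex := hfin
  have hclosed : IsClosed {x : ∀ i, G ⧸ Γ i | Compat Γ x} := by
    simp only [Compat, Set.ofPred_forall]
    refine isClosed_iInter fun i => isClosed_iInter fun g => ?_
    exact (isClosed_discrete {q : (G ⧸ Γ (i + 1)) × (G ⧸ Γ i) | g = q.1 → g = q.2}).preimage
      (by fun_prop : Continuous fun x : ∀ i, G ⧸ Γ i => (x (i + 1), x i))
  exact isCompact_iff_compactSpace.mp hclosed.isCompact

variable [∀ i, (Γ i).Normal] (hdec : ∀ i, Γ (i + 1) ≤ Γ i) [TopologicalSpace G]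

theorem Subodometer.exists_tendsto_smul_mul (z : Subodometer Γ) :
    letI := odoGroup Γ hdec
    ∃ γ : ℕ → G, ∀ w : Subodometer Γ,
      Filter.Tendsto (fun n => γ n • w) Filter.atTop (nhds (z * w)) := by
  let := odoGroup Γ hdec
  choose γ hγ using fun n => QuotientGroup.mk_surjective (z.1 n)
  refine ⟨γ, fun w => tendsto_subtype_rng.mpr (tendsto_pi_nhds.mpr fun i => ?_)⟩
  refine tendsto_nhds_of_eventually_eq ?_
  filter_upwards [Filter.eventually_ge_atTop i] with n hn
  obtain ⟨a, ha⟩ := QuotientGroup.mk_surjective (w.1 i)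
  change γ n • w.1 i = z.1 i * w.1 i
  rw [← z.2.mk_eq_of_le hn (hγ n), ← ha]
  rfl

theorem Subodometer.map_mul_eq_of_map_eq {X : Type*} [TopologicalSpace X] [T2Space X]
    [MulAction G X] {p : Subodometer Γ → X} (hc : Continuous p)
    (hequiv : ∀ (g : G) (x : Subodometer Γ), p (g • x) = g • p x) :
    letI := odoGroup Γ hdec
    ∀ z x y : Subodometer Γ, p x = p y → p (z * x) = p (z * y) := by
  let := odoGroup Γ hdec
  intro z x y hxy
  obtain ⟨γ, hγ⟩ := Subodometer.exists_tendsto_smul_mul hdec z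
  have hsame : ∀ n, p (γ n • x) = p (γ n • y) := fun n => by rw [hequiv, hequiv, hxy]
  exact tendsto_nhds_unique (((hc.tendsto _).comp (hγ x)).congr hsame)
    ((hc.tendsto _).comp (hγ y))

end Odometer

theorem statement2_general {G X : Type*} [Group G] [TopologicalSpace G]
    [DiscreteTopology G] [MetricSpace X] [MulAction G X]
    (Γ : ℕ → Subgroup G) (hdec : ∀ i, Γ (i + 1) ≤ Γ i) (hfin : ∀ i, (Γ i).FiniteIndex)
    [hnorm : ∀ i, (Γ i).Normal]
    (p : Subodometer Γ → X) (hp : IsFactorMap G p) :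
    let _inst : Group (Subodometer Γ) := odoGroup Γ hdec
    ∃ H : Subgroup (Subodometer Γ),
      (H : Set (Subodometer Γ)) = p ⁻¹' {p (1 : Subodometer Γ)} ∧
      IsClosed (H : Set (Subodometer Γ)) ∧
      (∀ g : Subodometer Γ,
        p ⁻¹' {p g} = (fun h : Subodometer Γ => g * h) '' (H : Set (Subodometer Γ))) ∧
      ∃ φ : (Subodometer Γ ⧸ H) ≃ₜ X,
        (∀ y : Subodometer Γ, φ (QuotientGroup.mk y) = p y) ∧
        (∀ (g : G) (y : Subodometer Γ),
          φ (QuotientGroup.mk (g • y)) = g • φ (QuotientGroup.mk y)) := by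
  intro _inst
  have : CompactSpace (Subodometer Γ) := Subodometer.compactSpace hfin
  obtain ⟨hc, hs, hequiv⟩ := hp
  have hfib := Subodometer.map_mul_eq_of_map_eq hdec hc hequiv
  refine ⟨fiberSubgroup p hfib, rfl, isClosed_singleton.preimage hc,
    preimage_singleton_eq_image_mul_fiberSubgroup p hfib,
    fiberSubgroup.quotientHomeomorph p hfib hc hs,
    fiberSubgroup.quotientHomeomorph_mk p hfib hc hs, fun g y => ?_⟩
  simp only [fiberSubgroup.quotientHomeomorph_mk, hequiv]

/-- Proposition `caractersubodometre`: if `p : ←G → X` is a factor map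
from a `G`-odometer, then `H = p⁻¹(p(e))` is a closed subgroup of `←G`, the fibers of `p`
are exactly the cosets of `H`, and `p` induces a `G`-equivariant homeomorphism
`←G/H ≃ X`. -/
theorem statement2 {G X : Type*} [Group G] [Group.FG G] [TopologicalSpace G]
    [DiscreteTopology G] [MetricSpace X] [CompactSpace X] [MulAction G X]
    (hX : ∀ g : G, Continuous fun x : X => g • x)
    (Γ : ℕ → Subgroup G) (hdec : ∀ i, Γ (i + 1) ≤ Γ i) (hfin : ∀ i, (Γ i).FiniteIndex)
    [hnorm : ∀ i, (Γ i).Normal]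
    (p : Subodometer Γ → X) (hp : IsFactorMap G p) :
    let _inst : Group (Subodometer Γ) := odoGroup Γ hdec
    ∃ H : Subgroup (Subodometer Γ),
      (H : Set (Subodometer Γ)) = p ⁻¹' {p (1 : Subodometer Γ)} ∧
      IsClosed (H : Set (Subodometer Γ)) ∧
      (∀ g : Subodometer Γ,
        p ⁻¹' {p g} = (fun h : Subodometer Γ => g * h) '' (H : Set (Subodometer Γ))) ∧
      ∃ φ : (Subodometer Γ ⧸ H) ≃ₜ X,
        (∀ y : Subodometer Γ, φ (QuotientGroup.mk y) = p y) ∧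
        (∀ (g : G) (y : Subodometer Γ),
          φ (QuotientGroup.mk (g • y)) = g • φ (QuotientGroup.mk y)) :=
  statement2_general Γ hdec hfin (hnorm := hnorm) p hp
end

section
/- Let G be a discrete finitely generated group acting by homeomorphisms on a compact metric space X, and let x ∈ X be a regularly recurrent point whose G-orbit is dense in X. Then for every closed neighborhood V of x there exists a finite-index subgroup Γ of G such that Γ ⊆ T_V(x), the orbit closure Ω_Γ(x) is clopen, for g, g' ∈ G one has g·Ω_Γ(x) = g'·Ω_Γ(x) if and only if g and g' lie in the same left coset of Γ, and the family {w·Ω_Γ(x) : w ∈ G/Γ} is a (finite) clopen partition of X. If moreover x is strongly regularly recurrent, then Γ can be chosen to be a normal subgroup of G. -/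
open Pointwise MeasureTheory

/-- The set of return times of `x` to `A`: `T_A(x) = {g ∈ G : g • x ∈ A}`. -/
def ReturnTimes (G : Type*) {X : Type*} [SMul G X] (x : X) (A : Set X) : Set G :=
  {g : G | g • x ∈ A}

/-- A point `x` is regularly recurrent if every open neighborhood of `x` contains the
`Γ`-orbit of `x` for some finite-index subgroup `Γ` of `G`. -/
def RegularlyRecurrent (G : Type*) {X : Type*} [Group G] [TopologicalSpace X] [MulAction G X]
    (x : X) : Prop :=
  ∀ V : Set X, IsOpen V → x ∈ V →
    ∃ Γ : Subgroup G, Γ.FiniteIndex ∧ (Γ : Set G) ⊆ ReturnTimes G x V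

/-- A point `x` is strongly regularly recurrent if every open neighborhood `V` of `x`
contains a clopen neighborhood `W` of `x` whose return-time set `T_W(x)` is a
finite-index normal subgroup of `G`. -/
def StronglyRegularlyRecurrent (G : Type*) {X : Type*} [Group G] [TopologicalSpace X]
    [MulAction G X] (x : X) : Prop :=
  ∀ V : Set X, IsOpen V → x ∈ V →
    ∃ W : Set X, IsClopen W ∧ x ∈ W ∧ W ⊆ V ∧
      ∃ Γ : Subgroup G, Γ.Normal ∧ Γ.FiniteIndex ∧ ReturnTimes G x W = (Γ : Set G)

/-- The conclusion of Lemma `existencia`: a finite-index subgroup `Γ ⊆ T_V(x)` such that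
the translates of the clopen set `Ω_Γ(x)` by the cosets of `Γ` form a clopen partition
of `X`. -/
def GoodPartition (G : Type*) {X : Type*} [Group G] [TopologicalSpace X] [MulAction G X]
    (x : X) (V : Set X) (Γ : Subgroup G) : Prop :=
  Γ.FiniteIndex ∧ (Γ : Set G) ⊆ ReturnTimes G x V ∧
    IsClopen (closure ((fun h : G => h • x) '' (Γ : Set G))) ∧
    (∀ g : G, IsClopen (g • closure ((fun h : G => h • x) '' (Γ : Set G)))) ∧
    (∀ g g' : G,
      g • closure ((fun h : G => h • x) '' (Γ : Set G))
        = g' • closure ((fun h : G => h • x) '' (Γ : Set G)) ↔ g⁻¹ * g' ∈ Γ) ∧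
    (∀ g g' : G, g⁻¹ * g' ∉ Γ →
      Disjoint (g • closure ((fun h : G => h • x) '' (Γ : Set G)))
        (g' • closure ((fun h : G => h • x) '' (Γ : Set G)))) ∧
    (⋃ g : G, g • closure ((fun h : G => h • x) '' (Γ : Set G))) = Set.univ

/-!
Write `Ω_Γ(y)` for the closure of the `Γ`-orbit of `y`. When `Λ` has finite index, `G` moves
`Ω_Λ(x)` to only finitely many translates, so for every subgroup `Γ` the set `Ω_Γ(x)` lies in
the closed set `⋃ γ ∈ Γ, γ • Ω_Λ(x)`. Choosing `Λ` among the return times of a small closed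
neighbourhood of the regularly recurrent point `x` shows that `x ∈ Ω_Γ(y)` for every
`y ∈ Ω_Γ(x)`. For `N` normal of finite index this makes the translates of `Ω_N(x)` pairwise
equal or disjoint, and for `Γ = G`, where `Ω_G(x) = X` by density, it shows that they cover
`X`; a finite closed cover by pairwise equal-or-disjoint sets consists of clopen sets.
The subgroup of the theorem is the stabilizer of `Ω_N(x)`, where `N` is the normal core of a
finite-index group of return times to `V`, or, in the strong case, `T_W(x)` itself.
-/

open MulAction Set

lemma isOpen_of_finite_closed_cover {X : Type*} [TopologicalSpace X] {𝒮 : Set (Set X)}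
    (h𝒮 : 𝒮.Finite) (hclosed : ∀ t ∈ 𝒮, IsClosed t) (hcover : ⋃₀ 𝒮 = univ) {s : Set X}
    (hs : ∀ t ∈ 𝒮, t ⊆ s ∨ Disjoint t s) : IsOpen s := by
  have hcompl : sᶜ = ⋃ t ∈ {t ∈ 𝒮 | Disjoint t s}, t := by
    refine Subset.antisymm (fun y hy => ?_) (iUnion₂_subset fun t ht => ht.2.subset_compl_right)
    obtain ⟨t, ht, hyt⟩ := mem_sUnion.1 (hcover.symm ▸ mem_univ y)
    rcases hs t ht with hts | hts
    · exact absurd (hts hyt) hy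
    · exact mem_biUnion ⟨ht, hts⟩ hyt
  rw [← isClosed_compl_iff, hcompl]
  exact (h𝒮.subset (sep_subset _ _)).isClosed_biUnion fun t ht => hclosed t ht.1

section OrbitClosure

variable {G X : Type*} [Group G] [TopologicalSpace X] [MulAction G X]

def orbitClosure (Γ : Subgroup G) (x : X) : Set X :=
  closure ((fun h : G => h • x) '' (Γ : Set G))

lemma mem_orbitClosure_self (Γ : Subgroup G) (x : X) : x ∈ orbitClosure Γ x :=
  subset_closure ⟨1, Γ.one_mem, one_smul G x⟩

lemma orbitClosure_top {x : X} (hdense : Dense (range fun g : G => g • x)) :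
    orbitClosure (⊤ : Subgroup G) x = univ := by
  simpa [orbitClosure] using hdense.closure_eq

lemma orbitClosure_subset_of_subset_returnTimes {Γ : Subgroup G} {x : X} {V : Set X}
    (hV : IsClosed V) (hΓV : (Γ : Set G) ⊆ ReturnTimes G x V) : orbitClosure Γ x ⊆ V :=
  closure_minimal (image_subset_iff.2 hΓV) hV

lemma smul_mem_orbitClosure_of_mem_stabilizer {Γ : Subgroup G} {x : X} {g : G}
    (hg : g ∈ stabilizer G (orbitClosure Γ x)) : g • x ∈ orbitClosure Γ x := by
  rw [← mem_stabilizer_iff.1 hg]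
  exact smul_mem_smul_set (mem_orbitClosure_self Γ x)

variable [ContinuousConstSMul G X]

lemma smul_orbitClosure_of_mem {Γ : Subgroup G} {γ : G} (hγ : γ ∈ Γ) (x : X) :
    γ • orbitClosure Γ x = orbitClosure Γ x := by
  rw [orbitClosure, ← closure_smul, ← image_smul, image_image]
  congr 1
  ext y
  constructor
  · rintro ⟨h, hh, rfl⟩
    exact ⟨γ * h, Γ.mul_mem hγ hh, mul_smul γ h x⟩
  · rintro ⟨h, hh, rfl⟩
    exact ⟨γ⁻¹ * h, Γ.mul_mem (Γ.inv_mem hγ) hh, by simp [smul_smul]⟩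

lemma Subgroup.Normal.smul_orbitClosure {N : Subgroup G} (hN : N.Normal) (g : G) (x : X) :
    g • orbitClosure N x = orbitClosure N (g • x) := by
  rw [orbitClosure, orbitClosure, ← closure_smul, ← image_smul, image_image]
  congr 1
  ext y
  constructor
  · rintro ⟨h, hh, rfl⟩
    exact ⟨g * h * g⁻¹, hN.conj_mem h hh g, by simp [smul_smul]⟩
  · rintro ⟨h, hh, rfl⟩
    exact ⟨g⁻¹ * h * g, by simpa using hN.conj_mem h hh g⁻¹, by simp [smul_smul, mul_assoc]⟩

lemma orbitClosure_subset_of_mem {Γ : Subgroup G} {x y : X} (hy : y ∈ orbitClosure Γ x) :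
    orbitClosure Γ y ⊆ orbitClosure Γ x := by
  refine closure_minimal ?_ isClosed_closure
  rintro _ ⟨γ, hγ, rfl⟩
  rw [← smul_orbitClosure_of_mem hγ x]
  exact smul_mem_smul_set hy

lemma le_stabilizer_orbitClosure (Γ : Subgroup G) (x : X) :
    Γ ≤ stabilizer G (orbitClosure Γ x) :=
  fun _ hγ => mem_stabilizer_iff.2 (smul_orbitClosure_of_mem hγ x)

lemma finite_range_smul_orbitClosure (Λ : Subgroup G) [Λ.FiniteIndex] (x : X) :
    (range fun g : G => g • orbitClosure Λ x).Finite := by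
  have := Subgroup.finiteIndex_of_le (le_stabilizer_orbitClosure Λ x)
  refine finite_of_ncard_ne_zero (s := orbit G (orbitClosure Λ x)) ?_
  rw [← index_stabilizer]
  exact Subgroup.FiniteIndex.index_ne_zero

lemma orbitClosure_subset_biUnion_smul (Γ Λ : Subgroup G) [Λ.FiniteIndex] (x : X) :
    orbitClosure Γ x ⊆ ⋃ γ ∈ Γ, γ • orbitClosure Λ x := by
  have hclosed : IsClosed (⋃ γ ∈ Γ, γ • orbitClosure Λ x) := by
    have hsub : (fun g : G => g • orbitClosure Λ x) '' (Γ : Set G) ⊆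
        range fun g : G => g • orbitClosure Λ x := image_subset_range _ _
    change IsClosed (⋃ γ ∈ (Γ : Set G), γ • orbitClosure Λ x)
    rw [← sUnion_image, sUnion_eq_biUnion]
    exact ((finite_range_smul_orbitClosure Λ x).subset hsub).isClosed_biUnion
      (by rintro _ ⟨g, -, rfl⟩; exact isClosed_closure.smul g)
  refine closure_minimal ?_ hclosed
  rintro _ ⟨γ, hγ, rfl⟩
  exact mem_biUnion hγ (smul_mem_smul_set (mem_orbitClosure_self Λ x))

lemma iUnion_smul_orbitClosure_eq_univ {x : X} (hdense : Dense (range fun g : G => g • x))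
    (Λ : Subgroup G) [Λ.FiniteIndex] : ⋃ g : G, g • orbitClosure Λ x = univ := by
  refine eq_univ_of_univ_subset ?_
  rw [← orbitClosure_top hdense]
  simpa using orbitClosure_subset_biUnion_smul ⊤ Λ x

namespace RegularlyRecurrent

variable [RegularSpace X] {x : X}

lemma mem_orbitClosure (hrr : RegularlyRecurrent G x) {Γ : Subgroup G} {y : X}
    (hy : y ∈ orbitClosure Γ x) : x ∈ orbitClosure Γ y := by
  refine (mem_closure_iff_nhds_basis (closed_nhds_basis x)).2 fun C ⟨hC, hCc⟩ => ?_
  obtain ⟨Λ, hΛ, hΛC⟩ := hrr (interior C) isOpen_interior (mem_interior_iff_mem_nhds.2 hC)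
  have hΛC' : orbitClosure Λ x ⊆ C :=
    orbitClosure_subset_of_subset_returnTimes hCc
      (hΛC.trans fun g h => (interior_subset h : g • x ∈ C))
  obtain ⟨γ, hγ, z, hz, rfl⟩ := mem_iUnion₂.1 (orbitClosure_subset_biUnion_smul Γ Λ x hy)
  exact ⟨γ⁻¹ • γ • z, ⟨γ⁻¹, Γ.inv_mem hγ, rfl⟩, by simpa using hΛC' hz⟩

lemma subset_smul_orbitClosure (hrr : RegularlyRecurrent G x) {N : Subgroup G} (hN : N.Normal)
    {h : G} (hne : ¬Disjoint (orbitClosure N x) (h • orbitClosure N x)) :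
    orbitClosure N x ⊆ h • orbitClosure N x := by
  obtain ⟨w, hw, hwh⟩ := not_disjoint_iff.1 hne
  rw [hN.smul_orbitClosure] at hwh ⊢
  calc orbitClosure N x ⊆ orbitClosure N w := orbitClosure_subset_of_mem (hrr.mem_orbitClosure hw)
    _ ⊆ orbitClosure N (h • x) := orbitClosure_subset_of_mem hwh

lemma mem_stabilizer_of_not_disjoint (hrr : RegularlyRecurrent G x) {N : Subgroup G}
    (hN : N.Normal) {h : G} (hne : ¬Disjoint (orbitClosure N x) (h • orbitClosure N x)) :
    h ∈ stabilizer G (orbitClosure N x) := by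
  have hne' : ¬Disjoint (orbitClosure N x) (h⁻¹ • orbitClosure N x) := by
    rwa [disjoint_comm, disjoint_smul_set_left, inv_inv]
  refine mem_stabilizer_iff.2 (Subset.antisymm ?_ (hrr.subset_smul_orbitClosure hN hne))
  calc h • orbitClosure N x ⊆ h • h⁻¹ • orbitClosure N x :=
        smul_set_mono (hrr.subset_smul_orbitClosure hN hne')
    _ = orbitClosure N x := smul_inv_smul h _

lemma isClopen_orbitClosure (hrr : RegularlyRecurrent G x)
    (hdense : Dense (range fun g : G => g • x)) {N : Subgroup G} (hN : N.Normal)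
    [N.FiniteIndex] : IsClopen (orbitClosure N x) := by
  refine ⟨isClosed_closure, isOpen_of_finite_closed_cover (finite_range_smul_orbitClosure N x)
    (forall_mem_range.2 fun g => isClosed_closure.smul g)
    (by rw [sUnion_range]; exact iUnion_smul_orbitClosure_eq_univ hdense N)
    (forall_mem_range.2 fun g => ?_)⟩
  by_cases hd : Disjoint (g • orbitClosure N x) (orbitClosure N x)
  · exact Or.inr hd
  · rw [disjoint_comm] at hd
    exact Or.inl (mem_stabilizer_iff.1 (hrr.mem_stabilizer_of_not_disjoint hN hd)).subset

lemma goodPartition_stabilizer (hrr : RegularlyRecurrent G x)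
    (hdense : Dense (range fun g : G => g • x)) {N : Subgroup G} (hN : N.Normal)
    [N.FiniteIndex] {V : Set X} (hV : orbitClosure N x ⊆ V) :
    GoodPartition G x V (stabilizer G (orbitClosure N x)) := by
  set Ω := orbitClosure N x
  have hΩ : closure ((fun h : G => h • x) '' (stabilizer G Ω : Set G)) = Ω :=
    Subset.antisymm
      (closure_minimal (image_subset_iff.2 fun _ hg => smul_mem_orbitClosure_of_mem_stabilizer hg)
        isClosed_closure)
      (closure_mono (image_mono (le_stabilizer_orbitClosure N x)))
  have hclopen : IsClopen Ω := hrr.isClopen_orbitClosure hdense hN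
  rw [GoodPartition, hΩ]
  refine ⟨Subgroup.finiteIndex_of_le (le_stabilizer_orbitClosure N x),
    fun g hg => hV (smul_mem_orbitClosure_of_mem_stabilizer hg), hclopen,
    fun g => ⟨hclopen.1.smul g, hclopen.2.smul g⟩, fun g g' => ?_, fun g g' hg => ?_,
    iUnion_smul_orbitClosure_eq_univ hdense N⟩
  · rw [mem_stabilizer_iff, mul_smul, inv_smul_eq_iff, eq_comm]
  · by_contra hd
    refine hg (hrr.mem_stabilizer_of_not_disjoint hN ?_)
    rwa [mul_smul, ← disjoint_smul_set (a := g), smul_inv_smul]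

end RegularlyRecurrent

end OrbitClosure

theorem statement5_general {G X : Type*} [Group G] [MetricSpace X]
    [MulAction G X]
    (hc : ∀ g : G, Continuous fun y : X => g • y)
    (x : X) (hdense : Dense (Set.range fun g : G => g • x))
    (hrr : RegularlyRecurrent G x) :
    (∀ V : Set X, IsClosed V → V ∈ nhds x → ∃ Γ : Subgroup G, GoodPartition G x V Γ) ∧
    (StronglyRegularlyRecurrent G x →
      ∀ V : Set X, IsClosed V → V ∈ nhds x →
        ∃ Γ : Subgroup G, Γ.Normal ∧ GoodPartition G x V Γ) := by
  have : ContinuousConstSMul G X := ⟨hc⟩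
  refine ⟨fun V hV hxV => ?_, fun hsrr V hV hxV => ?_⟩
  · obtain ⟨Γ, hΓ, hΓV⟩ := hrr (interior V) isOpen_interior (mem_interior_iff_mem_nhds.2 hxV)
    have hNV : orbitClosure Γ.normalCore x ⊆ V := orbitClosure_subset_of_subset_returnTimes hV
      fun γ hγ => interior_subset (s := V) (hΓV (Γ.normalCore_le hγ))
    exact ⟨_, hrr.goodPartition_stabilizer hdense Γ.normalCore_normal hNV⟩
  · obtain ⟨W, hW, -, hWV, N, hN, hNfi, hTW⟩ :=
      hsrr (interior V) isOpen_interior (mem_interior_iff_mem_nhds.2 hxV)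
    have hNW : orbitClosure N x ⊆ W := orbitClosure_subset_of_subset_returnTimes hW.isClosed hTW.ge
    have hstab : MulAction.stabilizer G (orbitClosure N x) = N :=
      le_antisymm (fun _ hg => hTW.le (hNW (smul_mem_orbitClosure_of_mem_stabilizer hg)))
        (le_stabilizer_orbitClosure N x)
    refine ⟨N, hN, hstab ▸ hrr.goodPartition_stabilizer hdense hN ?_⟩
    exact hNW.trans (hWV.trans interior_subset)

/-- Lemma `existencia`: for a (strongly) regularly recurrent point `x`
with dense orbit and any closed neighborhood `V` of `x`, there is a (normal) finite-index
subgroup `Γ ⊆ T_V(x)` whose orbit-closure translates clopenly partition `X`. -/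
theorem statement5 {G X : Type*} [Group G] [Group.FG G] [MetricSpace X] [CompactSpace X]
    [MulAction G X]
    (hc : ∀ g : G, Continuous fun y : X => g • y)
    (x : X) (hdense : Dense (Set.range fun g : G => g • x))
    (hrr : RegularlyRecurrent G x) :
    (∀ V : Set X, IsClosed V → V ∈ nhds x → ∃ Γ : Subgroup G, GoodPartition G x V Γ) ∧
    (StronglyRegularlyRecurrent G x →
      ∀ V : Set X, IsClosed V → V ∈ nhds x →
        ∃ Γ : Subgroup G, Γ.Normal ∧ GoodPartition G x V Γ) :=
  statement5_general hc x hdense hrr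
end

section
/- Let G be a discrete finitely generated group and let (X, G) be a minimal topological dynamical system. Then (X, G) is an almost 1-1 extension of a subodometer — i.e., there exist a decreasing sequence (Γ_i)_{i≥0} of finite-index subgroups of G and a factor map π : X → lim_{←i}(G/Γ_i, π_i) such that some point of the subodometer has exactly one π-preimage — if and only if X contains a regularly recurrent point. Moreover, for such an almost 1-1 factor map π, the set of regularly recurrent points of X is exactly the π-preimage of the set of points of the subodometer having exactly one π-preimage. -/
open Pointwise MeasureTheory

/-!
If `x` is regularly recurrent and `H` is a finite-index normal subgroup, the closure `Z` of the
`H`-orbit of `x` is a clopen block whose translates cover `X`. Indeed, regular recurrence lets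
every point of `Z` come back arbitrarily close to `x` along `H`, so `Z` is `H`-minimal; each
translate `g • Z` is the `H`-orbit closure of the regularly recurrent point `g • x`, hence two
translates that meet coincide, and finitely many of them partition `X`. Taking `H` smaller and
smaller yields nested tiles `Zᵢ` shrinking to `x`; recording at each level which translate of
`Zᵢ` contains a point is a factor map onto the subodometer of the stabilizers of the `Zᵢ`, with
fibre `⋂ Zᵢ = {x}` over the image of `x`.

Conversely, if `{x}` is a fibre of `π`, compactness pulls small cylinders around `π x` back into
any neighbourhood of `x`, and the stabilizer of a cylinder is a finite-index group of return
times. For an arbitrary almost 1-1 `π` with singleton fibre `{x₀}`, some cylinder around `π x₀`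
pulls back into the tile `h • Z ∋ x₀`; translating `x` into that cylinder shows that every tile
`Z ∋ x` contains the whole fibre of `π x`, and these tiles shrink to `x`.
-/

open MulAction Set Topology

instance {G : Type*} [Group G] [TopologicalSpace G] [DiscreteTopology G] (Γ : Subgroup G) :
    DiscreteTopology (G ⧸ Γ) :=
  QuotientGroup.discreteTopology (isOpen_discrete _)

section GroupAction

variable {G X : Type*} [Group G] [MulAction G X]

lemma MulAction.finiteIndex_stabilizer_of_finite [Finite X] (x : X) :
    (stabilizer G x).FiniteIndex :=
  ⟨by rw [index_stabilizer]; exact ncard_ne_zero_of_mem (mem_orbit_self x)⟩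

lemma MulAction.mk_eq_mk_stabilizer_iff (B : Set X) {g h : G} :
    (QuotientGroup.mk g : G ⧸ stabilizer G B) = QuotientGroup.mk h ↔ h • B = g • B := by
  rw [QuotientGroup.eq, mem_stabilizer_iff, mul_smul, inv_smul_eq_iff]

lemma MulAction.IsBlock.stabilizer_le_of_subset {B C : Set X} (hB : IsBlock G B) (hCB : C ⊆ B)
    (hC : C.Nonempty) : stabilizer G C ≤ stabilizer G B := by
  intro g hg
  rw [mem_stabilizer_iff] at hg ⊢
  obtain ⟨c, hc⟩ := hC
  have hgc : g • c ∈ C := by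
    rw [← hg]
    exact smul_mem_smul_set hc
  exact hB.smul_eq_of_nonempty ⟨g • c, smul_mem_smul_set (hCB hc), hCB hgc⟩

lemma MulAction.orbit_subgroup_mono {H K : Subgroup G} (hHK : H ≤ K) (x : X) :
    orbit H x ⊆ orbit K x := by
  rintro _ ⟨⟨g, hg⟩, rfl⟩
  exact ⟨⟨g, hHK hg⟩, rfl⟩

lemma MulAction.orbit_subset_iUnion_smul_orbit (H K : Subgroup G) (x : X) :
    orbit K x ⊆ ⋃ q : K ⧸ H.subgroupOf K, ((Quotient.out q : K) : G) • orbit H x := by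
  rintro _ ⟨k, rfl⟩
  set q : K ⧸ H.subgroupOf K := QuotientGroup.mk k
  have hk : (Quotient.out q)⁻¹ * k ∈ H.subgroupOf K := by
    rw [← QuotientGroup.eq, QuotientGroup.out_eq']
  refine mem_iUnion.2 ⟨q, ?_⟩
  rw [mem_smul_set_iff_inv_smul_mem]
  exact ⟨⟨_, hk⟩, (mul_smul _ _ x).trans rfl⟩

end GroupAction

namespace Subodometer

variable {G : Type*} [Group G] {Γ : ℕ → Subgroup G}

lemma coord_eq_of_le {v w : Subodometer Γ} {i j : ℕ} (hij : i ≤ j) (h : v.1 j = w.1 j) :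
    v.1 i = w.1 i := by
  induction j, hij using Nat.le_induction with
  | base => exact h
  | succ j _ ih =>
    obtain ⟨g, hg⟩ := QuotientGroup.mk_surjective (v.1 (j + 1))
    exact ih ((v.2 j g hg).symm.trans (w.2 j g (hg.trans h)))

lemma exists_smul_coord_eq (v w : Subodometer Γ) (n : ℕ) : ∃ g : G, (g • v).1 n = w.1 n :=
  exists_smul_eq G (v.1 n) (w.1 n)

variable [TopologicalSpace G]

lemma exists_cylinder_subset {U : Set (Subodometer Γ)} (hU : IsOpen U) {w : Subodometer Γ}
    (hw : w ∈ U) : ∃ n, {v : Subodometer Γ | v.1 n = w.1 n} ⊆ U := by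
  obtain ⟨V, hV, rfl⟩ := isOpen_induced_iff.mp hU
  obtain ⟨I, u, hu, hIu⟩ := isOpen_pi_iff.mp hV w.1 hw
  refine ⟨I.sup id, fun v hv => hIu fun i hi => ?_⟩
  rw [show v.1 i = w.1 i from coord_eq_of_le (Finset.le_sup (f := id) hi) hv]
  exact (hu i hi).2

variable [DiscreteTopology G]

instance : T2Space (Subodometer Γ) :=
  inferInstanceAs (T2Space {x : ∀ i, G ⧸ Γ i // Compat Γ x})

end Subodometer

section FactorMap

variable {G X : Type*} [Group G] [TopologicalSpace G] [DiscreteTopology G] [TopologicalSpace X]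
  [CompactSpace X] {Γ : ℕ → Subgroup G} {π : X → Subodometer Γ}

lemma exists_cylinder_preimage_subset (hπ : Continuous π) {y : Subodometer Γ} {V : Set X}
    (hV : IsOpen V) (hyV : π ⁻¹' {y} ⊆ V) : ∃ n, π ⁻¹' {v | v.1 n = y.1 n} ⊆ V := by
  have hy : y ∉ π '' Vᶜ := by
    rintro ⟨z, hz, rfl⟩
    exact hz (hyV rfl)
  obtain ⟨n, hn⟩ := Subodometer.exists_cylinder_subset
    (hV.isClosed_compl.isCompact.image hπ).isClosed.isOpen_compl hy
  exact ⟨n, fun z hz => by_contra fun hzV => hn hz ⟨z, hzV, rfl⟩⟩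

variable [MulAction G X]

lemma regularlyRecurrent_of_fiber_singleton (hΓ : ∀ i, (Γ i).FiniteIndex)
    (hπ : IsFactorMap G π) {x : X} (hx : ∀ z, π z = π x → z = x) :
    RegularlyRecurrent G x := by
  intro V hV hxV
  obtain ⟨n, hn⟩ := exists_cylinder_preimage_subset hπ.1 hV fun z hz => hx z hz ▸ hxV
  have := hΓ n
  refine ⟨stabilizer G ((π x).1 n), finiteIndex_stabilizer_of_finite _, fun g hg => hn ?_⟩
  show (π (g • x)).1 n = (π x).1 n
  rw [hπ.2.2]
  exact hg

end FactorMap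

section OrbitClosure

variable {G X : Type*} [Group G] [TopologicalSpace X] [MulAction G X]

lemma RegularlyRecurrent.exists_closure_orbit_subset [RegularSpace X] {x : X}
    (hx : RegularlyRecurrent G x) {V : Set X} (hV : V ∈ 𝓝 x) :
    ∃ H : Subgroup G, H.Normal ∧ H.FiniteIndex ∧ closure (orbit H x) ⊆ V := by
  obtain ⟨C, hC, hCc, hCV⟩ := exists_mem_nhds_isClosed_subset hV
  obtain ⟨H, hH, hHC⟩ := hx (interior C) isOpen_interior (mem_interior_iff_mem_nhds.2 hC)
  refine ⟨H.normalCore, inferInstance, inferInstance, (closure_minimal ?_ hCc).trans hCV⟩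
  rintro _ ⟨⟨g, hg⟩, rfl⟩
  exact interior_subset (hHC (H.normalCore_le hg))

variable [ContinuousConstSMul G X]

lemma RegularlyRecurrent.smul {x : X} (hx : RegularlyRecurrent G x) (g : G) :
    RegularlyRecurrent G (g • x) := by
  intro V hV hgx
  obtain ⟨H, hH, hHV⟩ := hx _ (hV.preimage (continuous_const_smul g)) hgx
  refine ⟨H.comap (MulAut.conj g⁻¹).toMonoidHom,
    ⟨by rw [Subgroup.index_comap_of_surjective _ (MulAut.conj g⁻¹).surjective]
        exact hH.index_ne_zero⟩, fun h hh => ?_⟩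
  have hconj : g⁻¹ * h * g ∈ H := by simpa [MulAut.conj] using hh
  have hret : g • (g⁻¹ * h * g) • x ∈ V := hHV hconj
  rwa [smul_smul, ← mul_assoc, ← mul_assoc, mul_inv_cancel, one_mul, ← smul_smul] at hret

lemma exists_smul_mem_closure_orbit (H K : Subgroup G) [H.FiniteIndex] {x y : X}
    (hy : y ∈ closure (orbit K x)) : ∃ k ∈ K, k • y ∈ closure (orbit H x) := by
  have hy' := closure_mono (orbit_subset_iUnion_smul_orbit H K x) hy
  rw [closure_iUnion_of_finite] at hy'
  obtain ⟨q, hq⟩ := mem_iUnion.1 hy'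
  rw [closure_smul, mem_smul_set_iff_inv_smul_mem] at hq
  exact ⟨_, K.inv_mem (Quotient.out q).2, hq⟩

lemma le_stabilizer_closure_orbit (H : Subgroup G) (x : X) :
    H ≤ stabilizer G (closure (orbit H x)) := fun h hh => by
  rw [mem_stabilizer_iff, ← closure_smul]
  exact congrArg closure (smul_orbit (⟨h, hh⟩ : H) x)

lemma closure_orbit_subset_of_mem {H : Subgroup G} {x y : X} (hy : y ∈ closure (orbit H x)) :
    closure (orbit H y) ⊆ closure (orbit H x) := by
  refine closure_minimal ?_ isClosed_closure
  rintro _ ⟨h, rfl⟩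
  have hh : (h : G) • closure (orbit H x) = closure (orbit H x) :=
    le_stabilizer_closure_orbit H x h.2
  exact hh ▸ smul_mem_smul_set hy

lemma smul_closure_orbit (H : Subgroup G) [H.Normal] (g : G) (x : X) :
    g • closure (orbit H x) = closure (orbit H (g • x)) := by
  rw [← closure_smul, smul_orbit_eq_orbit_smul]

variable [RegularSpace X]

lemma RegularlyRecurrent.mem_closure_orbit_of_mem {x y : X} (hx : RegularlyRecurrent G x)
    (K : Subgroup G) (hy : y ∈ closure (orbit K x)) : x ∈ closure (orbit K y) := by
  refine mem_closure_iff_nhds.2 fun V hV => ?_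
  obtain ⟨H, -, _, hHV⟩ := hx.exists_closure_orbit_subset hV
  obtain ⟨k, hk, hky⟩ := exists_smul_mem_closure_orbit H K hy
  exact ⟨k • y, hHV hky, ⟨k, hk⟩, rfl⟩

lemma RegularlyRecurrent.closure_orbit_eq_of_mem {x y : X} (hx : RegularlyRecurrent G x)
    {K : Subgroup G} (hy : y ∈ closure (orbit K x)) :
    closure (orbit K y) = closure (orbit K x) :=
  (closure_orbit_subset_of_mem hy).antisymm
    (closure_orbit_subset_of_mem (hx.mem_closure_orbit_of_mem K hy))

lemma RegularlyRecurrent.isBlock_closure_orbit {x : X} (hx : RegularlyRecurrent G x)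
    (H : Subgroup G) [H.Normal] : IsBlock G (closure (orbit H x)) := by
  rw [isBlock_iff_smul_eq_smul_of_nonempty]
  rintro g₁ g₂ ⟨y, hy₁, hy₂⟩
  rw [smul_closure_orbit] at hy₁ hy₂ ⊢
  rw [smul_closure_orbit, ← (hx.smul g₁).closure_orbit_eq_of_mem hy₁,
    ← (hx.smul g₂).closure_orbit_eq_of_mem hy₂]

end OrbitClosure

section Tile

structure IsClopenTile (G : Type*) {X : Type*} [Group G] [TopologicalSpace X] [MulAction G X]
    (B : Set X) : Prop where
  isClopen : IsClopen B
  isBlock : IsBlock G B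
  iUnion_smul : ⋃ g : G, g • B = Set.univ

variable {G X : Type*} [Group G] [TopologicalSpace X] [MulAction G X]

lemma MulAction.IsBlock.isOpen_of_isClosed [ContinuousConstSMul G X] {B : Set X}
    (hB : IsBlock G B) (hBc : IsClosed B) [(stabilizer G B).FiniteIndex]
    (hcover : ⋃ g : G, g • B = Set.univ) : IsOpen B := by
  have hfin : (orbit G B).Finite :=
    finite_of_ncard_ne_zero (index_stabilizer G B ▸ Subgroup.FiniteIndex.index_ne_zero)
  have hcompl : Bᶜ = ⋃ C ∈ {C ∈ orbit G B | Disjoint C B}, C := by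
    ext y
    refine ⟨fun hy => ?_, fun hy hyB => ?_⟩
    · obtain ⟨g, hg⟩ := mem_iUnion.1 (hcover ▸ mem_univ y)
      have hdisj : Disjoint (g • B) B :=
        (hB.smul_eq_or_disjoint g).resolve_left fun h => hy (h ▸ hg)
      exact mem_biUnion ⟨⟨g, rfl⟩, hdisj⟩ hg
    · obtain ⟨C, ⟨-, hC⟩, hyC⟩ := mem_iUnion₂.1 hy
      exact hC.ne_of_mem hyC hyB rfl
  rw [← isClosed_compl_iff, hcompl]
  refine (hfin.subset (sep_subset _ _)).isClosed_biUnion ?_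
  rintro _ ⟨⟨g, rfl⟩, -⟩
  exact hBc.smul g

lemma RegularlyRecurrent.isClopenTile_closure_orbit [ContinuousConstSMul G X] [RegularSpace X]
    [IsMinimal G X] {x : X} (hx : RegularlyRecurrent G x) (H : Subgroup G) [H.Normal]
    [H.FiniteIndex] : IsClopenTile G (closure (orbit H x)) := by
  have hcover : ⋃ g : G, g • closure (orbit H x) = Set.univ := by
    refine eq_univ_of_forall fun y => ?_
    have hy : y ∈ closure (orbit (⊤ : Subgroup G) x) :=
      closure_mono (by rintro _ ⟨g, rfl⟩; exact ⟨⟨g, Subgroup.mem_top g⟩, rfl⟩)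
        ((dense_orbit G x).closure_eq ▸ mem_univ y)
    obtain ⟨g, -, hg⟩ := exists_smul_mem_closure_orbit H ⊤ hy
    exact mem_iUnion.2 ⟨g⁻¹, by rwa [mem_smul_set_iff_inv_smul_mem, inv_inv]⟩
  have := Subgroup.finiteIndex_of_le (le_stabilizer_closure_orbit H x)
  have hblock := hx.isBlock_closure_orbit H
  exact ⟨⟨isClosed_closure, hblock.isOpen_of_isClosed isClosed_closure hcover⟩, hblock,
    hcover⟩

namespace IsClopenTile

variable {B : Set X} (hB : IsClopenTile G B)
include hB

lemma exists_mem_smul (y : X) : ∃ g : G, y ∈ g • B :=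
  mem_iUnion.1 (hB.iUnion_smul ▸ mem_univ y)

noncomputable def coset (y : X) : G ⧸ stabilizer G B :=
  QuotientGroup.mk (hB.exists_mem_smul y).choose

lemma coset_eq_mk_iff {y : X} {g : G} : hB.coset y = QuotientGroup.mk g ↔ y ∈ g • B := by
  have hy := (hB.exists_mem_smul y).choose_spec
  rw [coset, mk_eq_mk_stabilizer_iff]
  exact ⟨fun h => h ▸ hy, fun h => hB.isBlock.smul_eq_smul_of_nonempty ⟨y, h, hy⟩⟩

lemma coset_smul (g : G) (y : X) : hB.coset (g • y) = g • hB.coset y := by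
  obtain ⟨h, hh⟩ := QuotientGroup.mk_surjective (hB.coset y)
  rw [← hh, MulAction.Quotient.smul_mk, hB.coset_eq_mk_iff, smul_eq_mul, mul_smul]
  exact smul_mem_smul_set (hB.coset_eq_mk_iff.1 hh.symm)

lemma continuous_coset [ContinuousConstSMul G X] [TopologicalSpace G] [DiscreteTopology G] :
    Continuous hB.coset := by
  refine continuous_discrete_rng.2 fun q => ?_
  obtain ⟨g, rfl⟩ := QuotientGroup.mk_surjective q
  have hpre : hB.coset ⁻¹' {QuotientGroup.mk g} = g • B := ext fun y => hB.coset_eq_mk_iff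
  rw [hpre]
  exact hB.isClopen.isOpen.smul g

lemma mem_of_apply_eq [ContinuousConstSMul G X] [TopologicalSpace G] [DiscreteTopology G]
    [CompactSpace X] {Γ : ℕ → Subgroup G} {π : X → Subodometer Γ} (hπ : IsFactorMap G π) {x₀ : X}
    (hx₀ : ∀ z, π z = π x₀ → z = x₀) {x z : X} (hx : x ∈ B) (hz : π z = π x) : z ∈ B := by
  obtain ⟨h, hh⟩ := hB.exists_mem_smul x₀
  obtain ⟨n, hn⟩ := exists_cylinder_preimage_subset hπ.1 (hB.isClopen.isOpen.smul h)
    fun w hw => (hx₀ w hw).symm ▸ hh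
  obtain ⟨g, hg⟩ := Subodometer.exists_smul_coord_eq (π x) (π x₀) n
  have hgx : g • x ∈ h • B := hn (show (π (g • x)).1 n = _ by rw [hπ.2.2]; exact hg)
  have hgz : g • z ∈ h • B := hn (show (π (g • z)).1 n = _ by rw [hπ.2.2, hz]; exact hg)
  have hhg : h • B = g • B :=
    hB.isBlock.smul_eq_smul_of_nonempty ⟨g • x, hgx, smul_mem_smul_set hx⟩
  rwa [hhg, smul_mem_smul_set_iff] at hgz

end IsClopenTile

end Tile

section TileSequence

variable {G X : Type*} [Group G] [TopologicalSpace X] [MulAction G X] {B : ℕ → Set X}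
  (hB : ∀ i, IsClopenTile G (B i)) (hanti : ∀ i, B (i + 1) ⊆ B i)

noncomputable def subodometerMap (y : X) : Subodometer fun i => stabilizer G (B i) :=
  ⟨fun i => (hB i).coset y, fun i _ hg =>
    ((hB i).coset_eq_mk_iff.2
      (smul_set_mono (hanti i) ((hB (i + 1)).coset_eq_mk_iff.1 hg.symm))).symm⟩

lemma subodometerMap_eq_iff {x z : X} (hx : ∀ i, x ∈ B i) :
    subodometerMap hB hanti z = subodometerMap hB hanti x ↔ ∀ i, z ∈ B i := by
  have hmem : ∀ i y, (hB i).coset y = QuotientGroup.mk 1 ↔ y ∈ B i := fun i y => by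
    rw [(hB i).coset_eq_mk_iff, one_smul]
  have hxi : ∀ i, (hB i).coset x = QuotientGroup.mk 1 := fun i => (hmem i x).2 (hx i)
  refine ⟨fun h i => (hmem i z).1 ((congrFun (congrArg Subtype.val h) i).trans (hxi i)),
    fun h => Subtype.ext (funext fun i => ((hmem i z).2 (h i)).trans (hxi i).symm)⟩

lemma isFactorMap_subodometerMap [ContinuousConstSMul G X] [TopologicalSpace G]
    [DiscreteTopology G] [CompactSpace X] (hne : ∀ i, (B i).Nonempty) :
    IsFactorMap G (subodometerMap hB hanti) := by
  refine ⟨(continuous_pi fun i => (hB i).continuous_coset).subtype_mk _, fun w => ?_,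
    fun g y => Subtype.ext (funext fun i => (hB i).coset_smul g y)⟩
  choose g hg using fun i => QuotientGroup.mk_surjective (w.1 i)
  have hdec : ∀ i, g (i + 1) • B (i + 1) ⊆ g i • B i := fun i => by
    have hcoset :
        (QuotientGroup.mk (g (i + 1)) : G ⧸ stabilizer G (B i)) = QuotientGroup.mk (g i) :=
      (w.2 i (g (i + 1)) (hg (i + 1))).trans (hg i).symm
    rw [mk_eq_mk_stabilizer_iff] at hcoset
    exact hcoset ▸ smul_set_mono (hanti i)
  obtain ⟨y, hy⟩ := IsCompact.nonempty_iInter_of_sequence_nonempty_isCompact_isClosed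
    (fun i => g i • B i) hdec (fun i => (hne i).smul_set)
    ((hB 0).isClopen.isClosed.smul _).isCompact fun i => (hB i).isClopen.isClosed.smul _
  exact ⟨y, Subtype.ext (funext fun i =>
    ((hB i).coset_eq_mk_iff.2 (mem_iInter.1 hy i)).trans (hg i))⟩

end TileSequence

section Main

variable {G X : Type*} [Group G] [TopologicalSpace G] [DiscreteTopology G] [TopologicalSpace X]
  [CompactSpace X] [T2Space X] [MulAction G X] [ContinuousConstSMul G X] [IsMinimal G X]

theorem RegularlyRecurrent.exists_isFactorMap_subodometer [FirstCountableTopology X] {x : X}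
    (hx : RegularlyRecurrent G x) :
    ∃ Γ : ℕ → Subgroup G, (∀ i, (Γ i).FiniteIndex) ∧ (∀ i, Γ (i + 1) ≤ Γ i) ∧
      ∃ π : X → Subodometer Γ, IsFactorMap G π ∧ ∀ z, π z = π x → z = x := by
  obtain ⟨V, hV⟩ := (𝓝 x).exists_antitone_basis
  choose H hHn hHf hHV using fun i => hx.exists_closure_orbit_subset (hV.mem i)
  let K : ℕ → Subgroup G := fun i => ⨅ j : Fin (i + 1), H j
  have hKn : ∀ i, (K i).Normal := fun i => Subgroup.normal_iInf_normal fun j => hHn j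
  have hKf : ∀ i, (K i).FiniteIndex := fun i => Subgroup.finiteIndex_iInf fun j => hHf j
  have hKanti : ∀ i, K (i + 1) ≤ K i := fun i => le_iInf fun j => iInf_le _ j.castSucc
  let B : ℕ → Set X := fun i => closure (orbit (K i) x)
  have hB : ∀ i, IsClopenTile G (B i) := fun i =>
    have := hKn i; have := hKf i; hx.isClopenTile_closure_orbit (K i)
  have hBanti : ∀ i, B (i + 1) ⊆ B i := fun i => closure_mono (orbit_subgroup_mono (hKanti i) x)
  have hxB : ∀ i, x ∈ B i := fun i => subset_closure (mem_orbit_self x)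
  have hBV : ∀ i, B i ⊆ V i := fun i =>
    (closure_mono (orbit_subgroup_mono (iInf_le _ (Fin.last i)) x)).trans (hHV i)
  refine ⟨_, fun i => ?_, fun i => ?_, subodometerMap hB hBanti,
    isFactorMap_subodometerMap hB hBanti fun i => ⟨x, hxB i⟩, fun z hz => ?_⟩
  · have := hKf i
    exact Subgroup.finiteIndex_of_le (le_stabilizer_closure_orbit (K i) x)
  · exact (hB i).isBlock.stabilizer_le_of_subset (hBanti i) ⟨x, hxB (i + 1)⟩
  · have hzB := (subodometerMap_eq_iff hB hBanti hxB).1 hz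
    by_contra hzx
    obtain ⟨i, hi⟩ := hV.toHasBasis.mem_iff.1 (compl_singleton_mem_nhds (Ne.symm hzx))
    exact hi.2 (hBV i (hzB i)) rfl

theorem RegularlyRecurrent.eq_of_apply_eq {Γ : ℕ → Subgroup G} {π : X → Subodometer Γ}
    (hπ : IsFactorMap G π) (hsing : ∃ y, ∃! z, π z = y) {x z : X}
    (hx : RegularlyRecurrent G x) (hz : π z = π x) : z = x := by
  obtain ⟨y, x₀, rfl, hx₀⟩ := hsing
  by_contra hzx
  obtain ⟨H, _, _, hHV⟩ :=
    hx.exists_closure_orbit_subset (compl_singleton_mem_nhds (Ne.symm hzx))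
  exact hHV ((hx.isClopenTile_closure_orbit H).mem_of_apply_eq hπ hx₀
    (subset_closure (mem_orbit_self x)) hz) rfl

end Main

theorem statement7_general {G X : Type*} [Group G] [TopologicalSpace G]
    [DiscreteTopology G] [MetricSpace X] [CompactSpace X] [MulAction G X]
    (hc : ∀ g : G, Continuous fun x : X => g • x)
    (hmin : ∀ x : X, Dense (Set.range fun g : G => g • x)) :
    ((∃ Γ : ℕ → Subgroup G, (∀ i, (Γ i).FiniteIndex) ∧ (∀ i, Γ (i + 1) ≤ Γ i) ∧
        ∃ π : X → Subodometer Γ, IsFactorMap G π ∧ ∃ y : Subodometer Γ, ∃! z : X, π z = y)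
      ↔ ∃ x : X, RegularlyRecurrent G x) ∧
    (∀ Γ : ℕ → Subgroup G, (∀ i, (Γ i).FiniteIndex) → (∀ i, Γ (i + 1) ≤ Γ i) →
      ∀ π : X → Subodometer Γ, IsFactorMap G π → (∃ y : Subodometer Γ, ∃! z : X, π z = y) →
        {x : X | RegularlyRecurrent G x}
          = π ⁻¹' {y : Subodometer Γ | ∃! z : X, π z = y}) := by
  have : ContinuousConstSMul G X := ⟨hc⟩
  have : IsMinimal G X := ⟨hmin⟩
  refine ⟨⟨?_, fun ⟨x, hx⟩ => ?_⟩, fun Γ hΓ _ π hπ hsing => ?_⟩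
  · rintro ⟨Γ, hΓ, -, π, hπ, _, x, rfl, hx⟩
    exact ⟨x, regularlyRecurrent_of_fiber_singleton hΓ hπ hx⟩
  · obtain ⟨Γ, hΓ, hanti, π, hπ, hx⟩ := hx.exists_isFactorMap_subodometer
    exact ⟨Γ, hΓ, hanti, π, hπ, π x, x, rfl, hx⟩
  · ext x
    refine ⟨fun hx => ⟨x, rfl, fun z hz => hx.eq_of_apply_eq hπ hsing hz⟩, ?_⟩
    rintro ⟨z, -, hz⟩
    exact regularlyRecurrent_of_fiber_singleton hΓ hπ fun w hw => (hz w hw).trans (hz x rfl).symm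

/-- Theorem `almost`, subodometer case: a minimal system `(X, G)` is an
almost 1-1 extension of a subodometer iff it has a regularly recurrent point; and for any
such almost 1-1 factor map, the regularly recurrent points are exactly the preimages of
the points with a single preimage. -/
theorem statement7 {G X : Type*} [Group G] [Group.FG G] [TopologicalSpace G]
    [DiscreteTopology G] [MetricSpace X] [CompactSpace X] [MulAction G X]
    (hc : ∀ g : G, Continuous fun x : X => g • x)
    (hmin : ∀ x : X, Dense (Set.range fun g : G => g • x)) :
    ((∃ Γ : ℕ → Subgroup G, (∀ i, (Γ i).FiniteIndex) ∧ (∀ i, Γ (i + 1) ≤ Γ i) ∧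
        ∃ π : X → Subodometer Γ, IsFactorMap G π ∧ ∃ y : Subodometer Γ, ∃! z : X, π z = y)
      ↔ ∃ x : X, RegularlyRecurrent G x) ∧
    (∀ Γ : ℕ → Subgroup G, (∀ i, (Γ i).FiniteIndex) → (∀ i, Γ (i + 1) ≤ Γ i) →
      ∀ π : X → Subodometer Γ, IsFactorMap G π → (∃ y : Subodometer Γ, ∃! z : X, π z = y) →
        {x : X | RegularlyRecurrent G x}
          = π ⁻¹' {y : Subodometer Γ | ∃! z : X, π z = y}) :=
  statement7_general hc hmin
end
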